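/- For every integer n ≥ 1, the graph Q_n has diameter exactly 2n; in fact dist(c_0, c_n) = 2n. -/
import Mathlib


open SimpleGraph

/-- Vertices of the graph `Q n`: `A i`, `B i` are `a_{i+1}`, `b_{i+1}` for `i : Fin n`,
and `C j` is `c_j` for `j : Fin (n+1)`. -/
inductive QV (n : ℕ) where
  | A : Fin n → QV n
  | B : Fin n → QV n
  | C : Fin (n + 1) → QV n
deriving DecidableEq

/-- The graph `Q n`, with edges `c_{i-1}a_i`, `c_i a_i`, `c_{i-1}b_i`, `c_i b_i`
and `a_i b_i` for `1 ≤ i ≤ n`. -/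
def Qgraph (n : ℕ) : SimpleGraph (QV n) :=
  SimpleGraph.fromRel (fun x y =>
    match x, y with
    | .A i, .B j => i.val = j.val
    | .A i, .C j => j.val = i.val ∨ j.val = i.val + 1
    | .B i, .C j => j.val = i.val ∨ j.val = i.val + 1
    | _, _ => False)

namespace QAux

variable {n : ℕ}

/-- level function -/
def f : QV n → ℕ
  | .A i => 2 * i.val + 1
  | .B i => 2 * i.val + 1
  | .C j => 2 * j.val

lemma adj_CA (j : Fin (n+1)) (i : Fin n) (h : j.val = i.val ∨ j.val = i.val + 1) :
    (Qgraph n).Adj (QV.C j) (QV.A i) := by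
  rw [Qgraph, fromRel_adj]
  exact ⟨by simp, Or.inr h⟩

lemma f_lip {u v : QV n} (h : (Qgraph n).Adj u v) : f v ≤ f u + 1 ∧ f u ≤ f v + 1 := by
  rw [Qgraph, fromRel_adj] at h
  obtain ⟨-, h⟩ := h
  cases u <;> cases v <;> simp_all [f] <;> omega

lemma f_walk {u v : QV n} (p : (Qgraph n).Walk u v) : f v ≤ f u + p.length := by
  induction p with
  | nil => simp
  | cons h p ih =>
    have := (f_lip h).1
    simp only [SimpleGraph.Walk.length_cons]
    omega

end QAux

namespace QAux
variable {n : ℕ}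

lemma adj_CB (j : Fin (n+1)) (i : Fin n) (h : j.val = i.val ∨ j.val = i.val + 1) :
    (Qgraph n).Adj (QV.C j) (QV.B i) := by
  rw [Qgraph, fromRel_adj]
  exact ⟨by simp, Or.inr h⟩

lemma walk_to (j : ℕ) (hj : j ≤ n) :
    ∃ p : (Qgraph n).Walk (QV.C 0) (QV.C ⟨j, by omega⟩), p.length = 2 * j := by
  induction j with
  | zero => exact ⟨Walk.nil, rfl⟩
  | succ j ih =>
    obtain ⟨p, hp⟩ := ih (by omega)
    have h1 : (Qgraph n).Adj (QV.C ⟨j, by omega⟩) (QV.A ⟨j, by omega⟩) :=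
      adj_CA _ _ (Or.inl rfl)
    have h2 : (Qgraph n).Adj (QV.A ⟨j, by omega⟩) (QV.C ⟨j+1, by omega⟩) :=
      (adj_CA _ _ (Or.inr rfl)).symm
    exact ⟨p.append (Walk.cons h1 (Walk.cons h2 Walk.nil)), by simp [hp] <;> omega⟩

lemma walk_from (k : ℕ) : ∀ j : ℕ, (hj : j + k = n) →
    ∃ p : (Qgraph n).Walk (QV.C ⟨j, by omega⟩) (QV.C (Fin.last n)), p.length = 2 * k := by
  induction k with
  | zero =>
    intro j hj
    subst hj
    exact ⟨Walk.nil, rfl⟩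
  | succ k ih =>
    intro j hj
    obtain ⟨p, hp⟩ := ih (j+1) (by omega)
    have h1 : (Qgraph n).Adj (QV.C ⟨j, by omega⟩) (QV.A ⟨j, by omega⟩) :=
      adj_CA _ _ (Or.inl rfl)
    have h2 : (Qgraph n).Adj (QV.A ⟨j, by omega⟩) (QV.C ⟨j+1, by omega⟩) :=
      (adj_CA _ _ (Or.inr rfl)).symm
    exact ⟨Walk.cons h1 (Walk.cons h2 p), by simp [hp] <;> omega⟩

lemma walk_to_any (u : QV n) : ∃ p : (Qgraph n).Walk (QV.C 0) u, p.length ≤ f u := by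
  cases u with
  | A i =>
    obtain ⟨p, hp⟩ := walk_to (n := n) i.val (Nat.le_of_lt i.isLt)
    exact ⟨p.append (Walk.cons (adj_CA _ i (Or.inl rfl)) Walk.nil), by simp [hp, f] <;> omega⟩
  | B i =>
    obtain ⟨p, hp⟩ := walk_to (n := n) i.val (Nat.le_of_lt i.isLt)
    exact ⟨p.append (Walk.cons (adj_CB _ i (Or.inl rfl)) Walk.nil), by simp [hp, f] <;> omega⟩
  | C j =>
    obtain ⟨p, hp⟩ := walk_to (n := n) j.val j.is_le
    exact ⟨p, by simp [hp, f]⟩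

lemma walk_from_any (u : QV n) :
    ∃ p : (Qgraph n).Walk u (QV.C (Fin.last n)), f u + p.length ≤ 2 * n := by
  cases u with
  | A i =>
    obtain ⟨p, hp⟩ := walk_from (n := n) (n - (i.val+1)) (i.val+1) (by omega)
    exact ⟨Walk.cons ((adj_CA _ i (Or.inr rfl)).symm) p, by simp [hp, f] <;> omega⟩
  | B i =>
    obtain ⟨p, hp⟩ := walk_from (n := n) (n - (i.val+1)) (i.val+1) (by omega)
    exact ⟨Walk.cons ((adj_CB _ i (Or.inr rfl)).symm) p, by simp [hp, f] <;> omega⟩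
  | C j =>
    obtain ⟨p, hp⟩ := walk_from (n := n) (n - j.val) j.val (by omega)
    exact ⟨p, by simp [hp, f] <;> omega⟩

lemma walk_pair (u v : QV n) : ∃ p : (Qgraph n).Walk u v, p.length ≤ 2 * n := by
  by_cases h : f u + f v ≤ 2 * n
  · obtain ⟨p, hp⟩ := walk_to_any u
    obtain ⟨q, hq⟩ := walk_to_any v
    exact ⟨p.reverse.append q, by simp <;> omega⟩
  · obtain ⟨p, hp⟩ := walk_from_any u
    obtain ⟨q, hq⟩ := walk_from_any v
    exact ⟨p.append q.reverse, by simp <;> omega⟩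

end QAux

/-- `Q n` has diameter `2n`; in fact `dist(c_0, c_n) = 2n`. -/
theorem stmt4 (n : ℕ) (hn : 1 ≤ n) :
    (Qgraph n).diam = 2 * n ∧
    (Qgraph n).dist (QV.C 0) (QV.C (Fin.last n)) = 2 * n := by
  have hle : ∀ u v : QV n, (Qgraph n).edist u v ≤ (2 * n : ℕ) := by
    intro u v
    obtain ⟨p, hp⟩ := QAux.walk_pair u v
    exact p.edist_le.trans (Nat.cast_le.mpr hp)
  have hCn : QAux.f (QV.C (Fin.last n)) = 2 * n := by simp [QAux.f, Fin.last]
  have hC0 : QAux.f (QV.C (0 : Fin (n+1))) = 0 := by simp [QAux.f]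
  have hlow : ∀ p : (Qgraph n).Walk (QV.C 0) (QV.C (Fin.last n)), 2 * n ≤ p.length := by
    intro p
    have := QAux.f_walk p
    rw [hCn, hC0] at this
    omega
  obtain ⟨p0, hp0⟩ := QAux.walk_to (n := n) n le_rfl
  have hreach : (Qgraph n).Reachable (QV.C 0) (QV.C (Fin.last n)) := ⟨p0⟩
  have hd : (Qgraph n).dist (QV.C 0) (QV.C (Fin.last n)) = 2 * n := by
    refine le_antisymm ((SimpleGraph.dist_le p0).trans hp0.le) ?_
    obtain ⟨q, hq⟩ := hreach.exists_walk_length_eq_dist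
    exact hq ▸ hlow q
  have hedist : (Qgraph n).edist (QV.C 0) (QV.C (Fin.last n)) = (2 * n : ℕ) := by
    have ht : (Qgraph n).edist (QV.C 0) (QV.C (Fin.last n)) ≠ ⊤ :=
      edist_ne_top_iff_reachable.mpr hreach
    rw [← hd]
    exact (ENat.coe_toNat ht).symm
  have hediam : (Qgraph n).ediam = (2 * n : ℕ) := by
    refine le_antisymm (ediam_le_of_edist_le hle) (hedist ▸ edist_le_ediam)
  refine ⟨?_, hd⟩
  rw [diam, hediam, ENat.toNat_coe]
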